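/- arXiv:math/0610003 — 2 statements merged into one kernel-verified Lean document; each statement's English description precedes it below -/
import Mathlib

section
/- The lattice of closed subspaces of a Hilbert space $H$ is modular if and only if $H$ is finite-dimensional. -/
open scoped InnerProductSpace ComplexConjugate

/-- In a Hilbert space, the sum of a closed subspace and a one-dimensional subspace is closed. -/
lemma closed_sup_span_singleton_aux {H : Type*}
    [NormedAddCommGroup H] [InnerProductSpace ℂ H] [CompleteSpace H]
    {K : Submodule ℂ H} (hK : IsClosed (K : Set H)) (x : H) :
    IsClosed ((K ⊔ Submodule.span ℂ {x} : Submodule ℂ H) : Set H) := by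
  haveI : CompleteSpace K := hK.completeSpace_coe
  set y := x - (K.orthogonalProjectionOnto x : H) with hy_def
  have hyK : y ∈ Kᗮ := by exact K.sub_starProjection_mem_orthogonal x
  have hsup : K ⊔ Submodule.span ℂ {x} = K ⊔ Submodule.span ℂ {y} := by
    apply le_antisymm
    · refine sup_le le_sup_left ?_
      rw [Submodule.span_singleton_le_iff_mem]
      have hxd : x = (K.orthogonalProjectionOnto x : H) + y := by rw [hy_def]; abel
      rw [hxd]
      exact Submodule.add_mem _ (Submodule.mem_sup_left (K.orthogonalProjectionOnto x).2)
        (Submodule.mem_sup_right (Submodule.mem_span_singleton_self y))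
    · refine sup_le le_sup_left ?_
      rw [Submodule.span_singleton_le_iff_mem, hy_def]
      exact Submodule.sub_mem _
        (Submodule.mem_sup_right (Submodule.mem_span_singleton_self x))
        (Submodule.mem_sup_left (K.orthogonalProjectionOnto x).2)
  rw [hsup]
  by_cases hy0 : y = 0
  · simpa [hy0, Submodule.span_zero_singleton] using hK
  · set T : H →L[ℂ] H :=
      ContinuousLinearMap.id ℂ H - ((‖y‖ : ℂ) ^ 2)⁻¹ • (innerSL ℂ y).smulRight y with hT
    have hTapp : ∀ w, T w = w - ((‖y‖ : ℂ) ^ 2)⁻¹ • (⟪y, w⟫_ℂ • y) := by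
      intro w
      simp [hT]
    have hyy : (⟪y, y⟫_ℂ) = (‖y‖ : ℂ) ^ 2 := inner_self_eq_norm_sq_to_K y
    have hny : ((‖y‖ : ℂ) ^ 2) ≠ 0 := by
      have : (‖y‖ : ℂ) ≠ 0 := by exact_mod_cast norm_ne_zero_iff.mpr hy0
      exact pow_ne_zero 2 this
    have hmaps : ∀ w ∈ (K ⊔ Submodule.span ℂ {y} : Submodule ℂ H), T w ∈ K := by
      intro w hw
      obtain ⟨k, hk, m, hm, rfl⟩ := Submodule.mem_sup.mp hw
      obtain ⟨a, rfl⟩ := Submodule.mem_span_singleton.mp hm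
      have hyk : ⟪y, k⟫_ℂ = 0 := (Submodule.mem_orthogonal' K y).mp hyK k hk
      have hTval : T (k + a • y) = k := by
        rw [hTapp, inner_add_right, inner_smul_right, hyk, hyy, zero_add, smul_smul]
        have hcoe : ((‖y‖ : ℂ) ^ 2)⁻¹ * (a * (‖y‖ : ℂ) ^ 2) = a := by
          rw [mul_comm a, ← mul_assoc, inv_mul_cancel₀ hny, one_mul]
        rw [hcoe]
        abel
      rw [hTval]; exact hk
    apply isClosed_of_closure_subset
    intro z hz
    have hTz : T z ∈ K := by
      have h1 : T z ∈ closure (T '' ((K ⊔ Submodule.span ℂ {y} : Submodule ℂ H) : Set H)) :=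
        image_closure_subset_closure_image T.continuous ⟨z, hz, rfl⟩
      have h2 : closure (T '' ((K ⊔ Submodule.span ℂ {y} : Submodule ℂ H) : Set H))
          ⊆ closure (K : Set H) := by
        apply closure_mono
        rintro _ ⟨w, hw, rfl⟩
        exact hmaps w hw
      have := h2 h1
      rwa [hK.closure_eq] at this
    have hdiff : z - T z ∈ Submodule.span ℂ {y} := by
      rw [hTapp, sub_sub_cancel]
      exact Submodule.smul_mem _ _ (Submodule.smul_mem _ _ (Submodule.mem_span_singleton_self y))
    have hzeq : z = T z + (z - T z) := by abel
    rw [SetLike.mem_coe, hzeq]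
    exact Submodule.add_mem _ (Submodule.mem_sup_left hTz) (Submodule.mem_sup_right hdiff)

theorem stmt_7 {H : Type*}
    [NormedAddCommGroup H] [InnerProductSpace ℂ H] [CompleteSpace H] :
    (∀ L M N : Submodule ℂ H,
      IsClosed (L : Set H) → IsClosed (M : Set H) → IsClosed (N : Set H) →
      N ≤ L → L ⊓ (M ⊔ N).topologicalClosure = ((L ⊓ M) ⊔ N).topologicalClosure) ↔
    FiniteDimensional ℂ H := by
  constructor
  · intro h
    by_contra hFD
    obtain ⟨w, b, -⟩ := exists_hilbertBasis ℂ H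
    have hw : w.Infinite := by
      by_contra hfin
      rw [Set.not_infinite] at hfin
      haveI := hfin.fintype
      exact hFD (Module.Finite.of_basis b.toOrthonormalBasis.toBasis)
    set emb := hw.natEmbedding with hemb
    set u : ℕ → H := fun n => b (emb n) with hu_def
    have hu : Orthonormal ℂ u := b.orthonormal.comp _ emb.injective
    have hu' : ∀ i j, ⟪u i, u j⟫_ℂ = if i = j then (1 : ℂ) else 0 := orthonormal_iff_ite.mp hu
    set e : ℕ → H := fun n => u (2 * n) with he_def
    set g : ℕ → H := fun n => u (2 * n + 1) with hg_def
    have he : Orthonormal ℂ e := hu.comp (fun n => 2 * n) (fun a b hab => by dsimp only at hab; omega)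
    have hg : Orthonormal ℂ g := hu.comp (fun n => 2 * n + 1) (fun a b hab => by dsimp only at hab; omega)
    have hee : ∀ i j, ⟪e i, e j⟫_ℂ = if i = j then (1 : ℂ) else 0 := by
      intro i j
      have := hu' (2 * i) (2 * j)
      simpa [show (2 * i = 2 * j) ↔ i = j by omega] using this
    have hgg : ∀ i j, ⟪g i, g j⟫_ℂ = if i = j then (1 : ℂ) else 0 := by
      intro i j
      have := hu' (2 * i + 1) (2 * j + 1)
      simpa [show (2 * i + 1 = 2 * j + 1) ↔ i = j by omega] using this
    have hge : ∀ i j, ⟪g i, e j⟫_ℂ = 0 := by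
      intro i j
      have := hu' (2 * i + 1) (2 * j)
      simpa [show ¬(2 * i + 1 = 2 * j) by omega] using this
    have heg : ∀ i j, ⟪e i, g j⟫_ℂ = 0 := by
      intro i j
      have := hu' (2 * i) (2 * j + 1)
      simpa [show ¬(2 * i = 2 * j + 1) by omega] using this
    set c : ℕ → ℂ := fun n => ((n : ℂ) + 1)⁻¹ with hc_def
    have hc0 : ∀ n, c n ≠ 0 := by
      intro n
      show ((n : ℂ) + 1)⁻¹ ≠ 0
      exact inv_ne_zero (Nat.cast_add_one_ne_zero n)
    have hsum : Summable fun n => c n • g n := by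
      have hiff := hg.orthogonalFamily.summable_iff_norm_sq_summable (fun n => c n)
      have hfe : (fun i => LinearIsometry.toSpanSingleton ℂ H (hg.1 i) (c i))
          = fun i => c i • g i := by
        funext i
        simp [LinearIsometry.toSpanSingleton_apply]
      rw [hfe] at hiff
      rw [hiff]
      have hs : Summable fun n : ℕ => 1 / ((n : ℝ) + 1) ^ 2 := by
        have h2 := (summable_nat_add_iff (f := fun n : ℕ => 1 / (n : ℝ) ^ 2) 1).mpr
          (Real.summable_one_div_nat_pow.mpr one_lt_two)
        refine h2.congr fun n => ?_
        push_cast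
        ring
      refine hs.congr fun n => ?_
      have : ‖c n‖ = ((n : ℝ) + 1)⁻¹ := by
        rw [hc_def]
        rw [norm_inv]
        congr 1
        have : ((n : ℂ) + 1) = ((n + 1 : ℕ) : ℂ) := by push_cast; ring
        rw [this, Complex.norm_natCast]
        push_cast; ring
      rw [this]
      field_simp
    set x : H := ∑' n, c n • g n with hx_def
    have hx : HasSum (fun n => c n • g n) x := hsum.hasSum
    have hgx : ∀ k, ⟪g k, x⟫_ℂ = c k := by
      intro k
      have h1 := hx.mapL (innerSL ℂ (g k))
      have h2 : (fun n => innerSL ℂ (g k) (c n • g n)) = fun n => if n = k then c k else 0 := by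
        funext n
        by_cases hnk : n = k
        · subst hnk; simp [inner_smul_right, hgg, hg.1 n]
        · simp [inner_smul_right, hgg, Ne.symm hnk, hnk]
      rw [h2] at h1
      have := h1.unique (hasSum_ite_eq k (c k))
      rwa [innerSL_apply_apply] at this
    have hex : ∀ k, ⟪e k, x⟫_ℂ = 0 := by
      intro k
      have h1 := hx.mapL (innerSL ℂ (e k))
      have h2 : (fun n => innerSL ℂ (e k) (c n • g n)) = fun _ => (0 : ℂ) := by
        funext n
        simp [inner_smul_right, heg]
      rw [h2] at h1
      have := h1.unique hasSum_zero
      rwa [innerSL_apply_apply] at this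
    set f : ℕ → H := fun n => e n + c n • g n with hf_def
    set M := (Submodule.span ℂ (Set.range e)).topologicalClosure with hM_def
    set N := (Submodule.span ℂ (Set.range f)).topologicalClosure with hN_def
    have hMc : IsClosed (M : Set H) := Submodule.isClosed_topologicalClosure _
    have hNc : IsClosed (N : Set H) := Submodule.isClosed_topologicalClosure _
    have hMg : ∀ k, ∀ z ∈ M, ⟪g k, z⟫_ℂ = 0 := by
      intro k
      have hle : M ≤ LinearMap.ker (innerSL ℂ (g k) : H →ₗ[ℂ] ℂ) := by
        apply Submodule.topologicalClosure_minimal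
        · rw [Submodule.span_le]
          rintro _ ⟨n, rfl⟩
          simp only [SetLike.mem_coe, LinearMap.mem_ker, ContinuousLinearMap.coe_coe, innerSL_apply_apply]
          exact hge k n
        · exact ContinuousLinearMap.isClosed_ker _
      intro z hz
      have := hle hz
      rwa [LinearMap.mem_ker, ContinuousLinearMap.coe_coe, innerSL_apply_apply] at this
    have hNgq : ∀ k, ∀ yy ∈ N, ⟪g k, yy⟫_ℂ = c k * ⟪e k, yy⟫_ℂ := by
      intro k
      set φ : H →L[ℂ] ℂ := innerSL ℂ (g k) - c k • innerSL ℂ (e k) with hφ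
      have hle : N ≤ LinearMap.ker (φ : H →ₗ[ℂ] ℂ) := by
        apply Submodule.topologicalClosure_minimal
        · rw [Submodule.span_le]
          rintro _ ⟨n, rfl⟩
          simp only [SetLike.mem_coe, LinearMap.mem_ker]
          show φ (f n) = 0
          rw [hφ]
          simp only [ContinuousLinearMap.coe_sub', Pi.sub_apply, ContinuousLinearMap.coe_smul',
            Pi.smul_apply, innerSL_apply_apply, smul_eq_mul, hf_def]
          rw [inner_add_right, inner_add_right, inner_smul_right, inner_smul_right,
            hge, hgg, hee, heg]
          by_cases hnk : k = n
          · subst hnk; simp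
          · simp [hnk]
        · exact ContinuousLinearMap.isClosed_ker _
      intro yy hyy
      have h0 : φ yy = 0 := hle hyy
      rw [hφ] at h0
      simp only [ContinuousLinearMap.coe_sub', Pi.sub_apply, ContinuousLinearMap.coe_smul',
        Pi.smul_apply, innerSL_apply_apply, smul_eq_mul] at h0
      exact sub_eq_zero.mp h0
    set L := N ⊔ Submodule.span ℂ {x} with hL_def
    have hLc : IsClosed (L : Set H) := closed_sup_span_singleton_aux hNc x
    have heq := h L M N hLc hMc hNc le_sup_left
    have hxMN : x ∈ (M ⊔ N).topologicalClosure := by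
      have hmem : ∀ s : Finset ℕ, (∑ n ∈ s, c n • g n) ∈ (M ⊔ N : Submodule ℂ H) := by
        intro s
        apply Submodule.sum_mem
        intro n _
        have h1 : e n ∈ M := Submodule.le_topologicalClosure _ (Submodule.subset_span ⟨n, rfl⟩)
        have h2 : f n ∈ N := Submodule.le_topologicalClosure _ (Submodule.subset_span ⟨n, rfl⟩)
        have h3 : c n • g n = f n - e n := by
          show c n • g n = (e n + c n • g n) - e n
          abel
        rw [h3]
        exact Submodule.sub_mem _ (Submodule.mem_sup_right h2) (Submodule.mem_sup_left h1)
      have hcl : x ∈ closure ((M ⊔ N : Submodule ℂ H) : Set H) :=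
        mem_closure_of_tendsto hx (Filter.Eventually.of_forall hmem)
      rwa [← Submodule.topologicalClosure_coe, SetLike.mem_coe] at hcl
    have hxL : x ∈ L := Submodule.mem_sup_right (Submodule.mem_span_singleton_self x)
    have hLM : L ⊓ M = ⊥ := by
      rw [eq_bot_iff]
      rintro z ⟨hzL, hzM⟩
      obtain ⟨yy, hyy, m, hm, rfl⟩ := Submodule.mem_sup.mp hzL
      obtain ⟨a, rfl⟩ := Submodule.mem_span_singleton.mp hm
      have hkey : ∀ k, ⟪e k, yy⟫_ℂ = -a := by
        intro k
        have h0 : ⟪g k, yy + a • x⟫_ℂ = 0 := hMg k _ hzM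
        rw [inner_add_right, inner_smul_right, hgx, hNgq k yy hyy] at h0
        have h3 : c k * (⟪e k, yy⟫_ℂ + a) = 0 := by linear_combination h0
        rcases mul_eq_zero.mp h3 with h4 | h4
        · exact absurd h4 (hc0 k)
        · linear_combination h4
      have ha : a = 0 := by
        have hs2 : Summable fun k => ‖⟪e k, yy⟫_ℂ‖ ^ 2 :=
          Orthonormal.inner_products_summable yy he
        have hs3 : Summable fun _ : ℕ => ‖a‖ ^ 2 := by
          refine hs2.congr fun k => ?_
          rw [hkey k, norm_neg]
        have h5 : Filter.Tendsto (fun _ : ℕ => ‖a‖ ^ 2) Filter.atTop (nhds 0) :=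
          hs3.tendsto_atTop_zero
        have h6 : ‖a‖ ^ 2 = 0 := tendsto_nhds_unique tendsto_const_nhds h5
        have h7 : ‖a‖ = 0 := by
          have := pow_eq_zero_iff (n := 2) (by norm_num) |>.mp h6
          exact this
        rwa [norm_eq_zero] at h7
      rw [ha, zero_smul, add_zero] at hzM ⊢
      have hek : ∀ k, ⟪e k, yy⟫_ℂ = 0 := fun k => by rw [hkey k, ha, neg_zero]
      have hle : M ≤ LinearMap.ker (innerSL ℂ yy : H →ₗ[ℂ] ℂ) := by
        apply Submodule.topologicalClosure_minimal
        · rw [Submodule.span_le]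
          rintro _ ⟨n, rfl⟩
          simp only [SetLike.mem_coe, LinearMap.mem_ker, ContinuousLinearMap.coe_coe, innerSL_apply_apply]
          rw [← inner_conj_symm, hek n, map_zero]
        · exact ContinuousLinearMap.isClosed_ker _
      have h00 : ⟪yy, yy⟫_ℂ = 0 := by
        have := hle hzM
        rwa [LinearMap.mem_ker, ContinuousLinearMap.coe_coe, innerSL_apply_apply] at this
      simpa [Submodule.mem_bot] using inner_self_eq_zero.mp h00
    have hxN : x ∈ N := by
      have hx1 : x ∈ L ⊓ (M ⊔ N).topologicalClosure := ⟨hxL, hxMN⟩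
      rw [heq, hLM, bot_sup_eq, hNc.submodule_topologicalClosure_eq] at hx1
      exact hx1
    have h1 : ⟪g 0, x⟫_ℂ = c 0 * ⟪e 0, x⟫_ℂ := hNgq 0 x hxN
    rw [hgx, hex, mul_zero] at h1
    exact hc0 0 h1
  · intro hFD L M N _ _ _ hNL
    haveI := hFD
    have h1 : ∀ K : Submodule ℂ H, K.topologicalClosure = K := fun K =>
      (K.closed_of_finiteDimensional).submodule_topologicalClosure_eq
    rw [h1, h1]
    exact (inf_sup_assoc_of_le M hNL).symm
end

section
/- For inner functions $\theta_1, \theta_2, \theta_3$ in $H^\infty$ of the unit disk, the identity $\theta_1 \vee (\theta_2 \wedge \theta_3) \equiv (\theta_1 \vee \theta_2) \wedge (\theta_1 \vee \theta_3)$ holds, i.e., the lattice of inner functions under divisibility is distributive. -/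
set_option maxHeartbeats 1000000

open Metric MeasureTheory

/-- A bounded analytic function on the open unit disk. -/
def IsHinf (f : ℂ → ℂ) : Prop :=
  DifferentiableOn ℂ f (ball (0 : ℂ) 1) ∧ ∃ C : ℝ, ∀ z ∈ ball (0 : ℂ) 1, ‖f z‖ ≤ C

/-- An inner function: bounded analytic on the disk, with radial limits of modulus `1`
almost everywhere on the boundary. -/
def IsInner (f : ℂ → ℂ) : Prop :=
  DifferentiableOn ℂ f (ball (0 : ℂ) 1) ∧ (∀ z ∈ ball (0 : ℂ) 1, ‖f z‖ ≤ 1) ∧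
    ∀ᵐ (t : ℝ) ∂(volume.restrict (Set.Ioc (0 : ℝ) (2 * Real.pi))),
      Filter.Tendsto (fun r : ℝ => ‖f ((r : ℂ) * Complex.exp ((t : ℂ) * Complex.I))‖)
        (nhdsWithin 1 (Set.Iio 1)) (nhds 1)

/-- Divisibility of inner functions: `u ∣ v` iff `v = u·w` for some `w ∈ H^∞`. -/
def InnerDvd (u v : ℂ → ℂ) : Prop :=
  ∃ w : ℂ → ℂ, IsHinf w ∧ ∀ z ∈ ball (0 : ℂ) 1, v z = u z * w z

/-- `≡` : mutual divisibility. -/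
def InnerEquiv (u v : ℂ → ℂ) : Prop := InnerDvd u v ∧ InnerDvd v u

/-- `d` is a greatest common inner divisor of `u` and `v`. -/
def IsGCInnerDiv (u v d : ℂ → ℂ) : Prop :=
  IsInner d ∧ InnerDvd d u ∧ InnerDvd d v ∧
    ∀ e : ℂ → ℂ, IsInner e → InnerDvd e u → InnerDvd e v → InnerDvd e d

/-- `l` is a least common inner multiple of `u` and `v`. -/
def IsLCInnerMul (u v l : ℂ → ℂ) : Prop :=
  IsInner l ∧ InnerDvd u l ∧ InnerDvd v l ∧
    ∀ e : ℂ → ℂ, IsInner e → InnerDvd u e → InnerDvd v e → InnerDvd l e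

noncomputable section InnerAux

/-- Radial a.e. boundary modulus 1. -/
def Rad (f : ℂ → ℂ) : Prop :=
  ∀ᵐ (t : ℝ) ∂(volume.restrict (Set.Ioc (0 : ℝ) (2 * Real.pi))),
      Filter.Tendsto (fun r : ℝ => ‖f ((r : ℂ) * Complex.exp ((t : ℂ) * Complex.I))‖)
        (nhdsWithin 1 (Set.Iio 1)) (nhds 1)

lemma hinf_mul {f g : ℂ → ℂ} (hf : IsHinf f) (hg : IsHinf g) :
    IsHinf (fun z => f z * g z) := by
  obtain ⟨hfd, C, hC⟩ := hf
  obtain ⟨hgd, D, hD⟩ := hg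
  refine ⟨hfd.mul hgd, |C| * |D|, fun z hz => ?_⟩
  rw [norm_mul]
  exact mul_le_mul ((hC z hz).trans (le_abs_self C)) ((hD z hz).trans (le_abs_self D))
    (norm_nonneg _) (abs_nonneg _)

lemma innerDvd_trans {u v x : ℂ → ℂ} (h1 : InnerDvd u v) (h2 : InnerDvd v x) :
    InnerDvd u x := by
  obtain ⟨w1, hw1, he1⟩ := h1
  obtain ⟨w2, hw2, he2⟩ := h2
  refine ⟨fun z => w1 z * w2 z, hinf_mul hw1 hw2, fun z hz => ?_⟩
  rw [he2 z hz, he1 z hz, mul_assoc]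

lemma rad_mul {f g : ℂ → ℂ} (hf : Rad f) (hg : Rad g) : Rad (fun z => f z * g z) := by
  filter_upwards [hf, hg] with t h1 h2
  have := h1.mul h2
  simp only [one_mul] at this
  refine this.congr (fun r => ?_)
  simp [norm_mul]

/-- eventual membership of the radius in `(0,1)` and smallness along the radial filter -/
lemma eventually_radial {t : ℝ} : ∀ᶠ r : ℝ in nhdsWithin 1 (Set.Iio 1),
    (r : ℂ) * Complex.exp ((t : ℂ) * Complex.I) ∈ ball (0 : ℂ) 1 := by
  have h : Set.Ioo (0 : ℝ) 1 ∈ nhdsWithin 1 (Set.Iio 1) := by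
    apply mem_nhdsWithin.2
    exact ⟨Set.Ioi 0, isOpen_Ioi, by norm_num, by
      rintro x ⟨hx1, hx2⟩
      exact ⟨hx1, hx2⟩⟩
  filter_upwards [h] with r hr
  simp only [mem_ball, dist_zero_right, norm_mul]
  have : ‖Complex.exp ((t : ℂ) * Complex.I)‖ = 1 := by
    rw [Complex.norm_exp]
    simp
  rw [this, mul_one, Complex.norm_real, Real.norm_eq_abs, abs_of_pos hr.1]
  exact hr.2

/-- If `v = u * w` on the ball and `u, v` have radial modulus limits 1, so does `w`. -/
lemma rad_div {u v w : ℂ → ℂ} (hu : Rad u) (hv : Rad v)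
    (h : ∀ z ∈ ball (0 : ℂ) 1, v z = u z * w z) : Rad w := by
  filter_upwards [hu, hv] with t h1 h2
  have hne : ∀ᶠ r : ℝ in nhdsWithin 1 (Set.Iio 1),
      ‖u ((r : ℂ) * Complex.exp ((t : ℂ) * Complex.I))‖ ≠ 0 := by
    have := h1.eventually_ne (by norm_num : (1 : ℝ) ≠ 0)
    exact this
  have key : ∀ᶠ r : ℝ in nhdsWithin 1 (Set.Iio 1),
      ‖w ((r : ℂ) * Complex.exp ((t : ℂ) * Complex.I))‖ =
      ‖v ((r : ℂ) * Complex.exp ((t : ℂ) * Complex.I))‖ /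
      ‖u ((r : ℂ) * Complex.exp ((t : ℂ) * Complex.I))‖ := by
    filter_upwards [hne, eventually_radial (t := t)] with r hr hball
    rw [h _ hball, norm_mul]
    exact (mul_div_cancel_left₀ _ hr).symm
  have : Filter.Tendsto (fun r : ℝ =>
      ‖v ((r : ℂ) * Complex.exp ((t : ℂ) * Complex.I))‖ /
      ‖u ((r : ℂ) * Complex.exp ((t : ℂ) * Complex.I))‖)
      (nhdsWithin 1 (Set.Iio 1)) (nhds 1) := by
    have := h2.div h1 (by norm_num)
    rw [div_one] at this; exact this
  exact Filter.Tendsto.congr' (key.mono fun r hr => hr.symm) this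

lemma inner_not_zero {h : ℂ → ℂ} (hh : IsInner h) :
    ¬ (∀ z ∈ ball (0 : ℂ) 1, h z = 0) := by
  intro hz
  obtain ⟨-, -, hrad⟩ := hh
  have hempty : ∀ t : ℝ, ¬ Filter.Tendsto
      (fun r : ℝ => ‖h ((r : ℂ) * Complex.exp ((t : ℂ) * Complex.I))‖)
      (nhdsWithin 1 (Set.Iio 1)) (nhds 1) := by
    intro t ht
    have h0 : Filter.Tendsto
        (fun r : ℝ => ‖h ((r : ℂ) * Complex.exp ((t : ℂ) * Complex.I))‖)
        (nhdsWithin 1 (Set.Iio 1)) (nhds 0) := by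
      have : ∀ᶠ r : ℝ in nhdsWithin 1 (Set.Iio 1),
          ‖h ((r : ℂ) * Complex.exp ((t : ℂ) * Complex.I))‖ = 0 := by
        filter_upwards [eventually_radial (t := t)] with r hr
        rw [hz _ hr, norm_zero]
      exact tendsto_const_nhds.congr' (this.mono fun r hr => hr.symm)
    have : (1 : ℝ) = 0 := tendsto_nhds_unique ht h0
    norm_num at this
  have hmeas := MeasureTheory.ae_iff.1 hrad
  have hset : {t : ℝ | ¬ Filter.Tendsto
      (fun r : ℝ => ‖h ((r : ℂ) * Complex.exp ((t : ℂ) * Complex.I))‖)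
      (nhdsWithin 1 (Set.Iio 1)) (nhds 1)} = Set.univ := by
    ext t; simpa using hempty t
  rw [hset, Measure.restrict_apply_univ, Real.volume_Ioc] at hmeas
  rw [ENNReal.ofReal_eq_zero] at hmeas
  simp at hmeas
  linarith [Real.two_pi_pos]

lemma cancel {h f g : ℂ → ℂ} (hh : IsInner h)
    (hf : DifferentiableOn ℂ f (ball (0 : ℂ) 1))
    (hg : DifferentiableOn ℂ g (ball (0 : ℂ) 1))
    (he : ∀ z ∈ ball (0 : ℂ) 1, h z * f z = h z * g z) :
    ∀ z ∈ ball (0 : ℂ) 1, f z = g z := by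
  by_contra hcon
  push_neg at hcon
  obtain ⟨z₀, hz₀, hne⟩ := hcon
  -- near z₀, f - g ≠ 0, so h = 0 near z₀
  have hcont : ContinuousOn (fun z => f z - g z) (ball (0 : ℂ) 1) :=
    (hf.sub hg).continuousOn
  have hopen : IsOpen {z ∈ ball (0 : ℂ) 1 | f z - g z ≠ 0} := by
    have : {z ∈ ball (0 : ℂ) 1 | f z - g z ≠ 0}
        = ball (0 : ℂ) 1 ∩ (fun z => f z - g z) ⁻¹' {0}ᶜ := by
      ext z; simp [Set.mem_setOf_eq, And.comm]
    rw [this]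
    exact hcont.isOpen_inter_preimage isOpen_ball isOpen_compl_singleton
  have hz₀mem : z₀ ∈ {z ∈ ball (0 : ℂ) 1 | f z - g z ≠ 0} := ⟨hz₀, sub_ne_zero.2 hne⟩
  have hana : AnalyticOnNhd ℂ h (ball (0 : ℂ) 1) := hh.1.analyticOnNhd isOpen_ball
  have hev : h =ᶠ[nhds z₀] 0 := by
    filter_upwards [hopen.mem_nhds hz₀mem] with z hz
    have := he z hz.1
    have h2 : h z * (f z - g z) = 0 := by ring_nf; linear_combination this
    rcases mul_eq_zero.1 h2 with h3 | h3
    · exact h3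
    · exact absurd h3 hz.2
  have := hana.eqOn_zero_of_preconnected_of_eventuallyEq_zero
    (convex_ball (0 : ℂ) 1).isPreconnected hz₀ hev
  exact inner_not_zero hh (fun z hz => this hz)

section Poisson
open Complex Filter Set intervalIntegral

/-- The Poisson kernel algebraic identity on the circle of radius R. -/
lemma kernel_eq {R : ℝ} (hR : 0 < R) {z₀ w : ℂ} (hz : ‖z₀‖ < R) (hw : ‖w‖ = R) :
    (w * I) * ((w - z₀)⁻¹ + (starRingEnd ℂ) z₀ * (((R:ℂ))^2 - (starRingEnd ℂ) z₀ * w)⁻¹) =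
      I * (((R^2 - ‖z₀‖^2) / ‖w - z₀‖^2 : ℝ) : ℂ) := by
  have hwz : w - z₀ ≠ 0 := by
    intro h
    rw [sub_eq_zero] at h
    rw [h] at hw
    exact absurd hw (ne_of_lt hz)
  have hden : ((R:ℂ))^2 - (starRingEnd ℂ) z₀ * w ≠ 0 := by
    intro h
    rw [sub_eq_zero] at h
    have := congrArg norm h
    rw [norm_mul, RCLike.norm_conj, hw] at this
    simp only [norm_pow, Complex.norm_real, Real.norm_eq_abs, abs_of_pos hR] at this
    · nlinarith [norm_nonneg z₀]
  have hwz' : (starRingEnd ℂ) w - (starRingEnd ℂ) z₀ ≠ 0 := by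
    intro h
    apply hwz
    have := congrArg (starRingEnd ℂ) h
    simpa using this
  have hcw : (starRingEnd ℂ) w * w = ((R:ℂ))^2 := by
    rw [mul_comm, Complex.mul_conj']
    rw [hw]
  have hnorm : ((‖w - z₀‖:ℂ))^2 = (w - z₀) * ((starRingEnd ℂ) w - (starRingEnd ℂ) z₀) := by
    have : (w - z₀) * ((starRingEnd ℂ) w - (starRingEnd ℂ) z₀) = (w - z₀) * (starRingEnd ℂ) (w - z₀) := by
      simp [map_sub]
    rw [this, Complex.mul_conj']
  have hz₀ : ((‖z₀‖:ℂ))^2 = (starRingEnd ℂ) z₀ * z₀ := by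
    rw [mul_comm, Complex.mul_conj']
  push_cast
  rw [hnorm, hz₀]
  field_simp
  field_simp [show (R:ℂ)^2 - w * (starRingEnd ℂ) z₀ ≠ 0 by rwa [mul_comm] at hden]
  linear_combination ((((R:ℂ))^2 - (starRingEnd ℂ) z₀ * z₀)) * hcw

/-- Poisson integral representation on a circle of radius `R`. -/
lemma poisson_repr {f : ℂ → ℂ} {R : ℝ} (hR : 0 < R) {z₀ : ℂ} (hz : ‖z₀‖ < R)
    (hf : DiffContOnCl ℂ f (ball (0:ℂ) R)) :
    f z₀ = (2 * (Real.pi:ℂ))⁻¹ * ∫ t in (0:ℝ)..(2*Real.pi),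
      (((R^2 - ‖z₀‖^2) / ‖circleMap 0 R t - z₀‖^2 : ℝ) : ℂ) * f (circleMap 0 R t) := by
  have hzb : z₀ ∈ ball (0:ℂ) R := by simpa [mem_ball, dist_zero_right] using hz
  have h1 : (∮ z in C(0, R), (z - z₀)⁻¹ • f z) = (2 * Real.pi * I : ℂ) • f z₀ :=
    hf.circleIntegral_sub_inv_smul hzb
  have hcont_f : ContinuousOn f (closedBall (0:ℂ) R) := by
    have := hf.continuousOn
    rwa [closure_ball (0:ℂ) hR.ne'] at this
  have hden : ∀ z ∈ closedBall (0:ℂ) R, ((R:ℂ))^2 - (starRingEnd ℂ) z₀ * z ≠ 0 := by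
    intro z hzz h
    rw [sub_eq_zero] at h
    have := congrArg norm h
    rw [norm_mul, RCLike.norm_conj] at this
    simp only [norm_pow, Complex.norm_real, Real.norm_eq_abs, abs_of_pos hR] at this
    rw [mem_closedBall, dist_zero_right] at hzz
    nlinarith [norm_nonneg z₀, norm_nonneg z, mul_le_mul_of_nonneg_left hzz (norm_nonneg z₀)]
  have hg_cont : ContinuousOn
      (fun z => ((starRingEnd ℂ) z₀ * (((R:ℂ))^2 - (starRingEnd ℂ) z₀ * z)⁻¹) • f z)
      (closedBall (0:ℂ) R) := by
    apply ContinuousOn.fun_smul _ hcont_f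
    apply ContinuousOn.mul continuousOn_const
    exact ContinuousOn.inv₀ (continuousOn_const.sub (continuousOn_const.mul continuousOn_id))
      hden
  have h2 : (∮ z in C(0, R),
      ((starRingEnd ℂ) z₀ * (((R:ℂ))^2 - (starRingEnd ℂ) z₀ * z)⁻¹) • f z) = 0 := by
    apply Complex.circleIntegral_eq_zero_of_differentiable_on_off_countable hR.le
      Set.countable_empty hg_cont
    intro z hzz
    apply DifferentiableAt.fun_smul
    · apply DifferentiableAt.mul (differentiableAt_const _)
      apply DifferentiableAt.inv
      · exact DifferentiableAt.sub (differentiableAt_const _)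
          ((differentiableAt_const _).mul differentiableAt_id)
      · exact hden z (ball_subset_closedBall hzz.1)
    · exact hf.differentiableAt isOpen_ball hzz.1
  have hsph : ∀ z ∈ sphere (0:ℂ) R, z - z₀ ≠ 0 := by
    intro z hzz h
    rw [sub_eq_zero] at h
    rw [mem_sphere, dist_zero_right] at hzz
    rw [h] at hzz
    exact absurd hzz (ne_of_lt hz)
  have hi1 : CircleIntegrable (fun z => (z - z₀)⁻¹ • f z) 0 R := by
    apply ContinuousOn.circleIntegrable hR.le
    exact ContinuousOn.smul
      (ContinuousOn.inv₀ (continuousOn_id.sub continuousOn_const) hsph)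
      (hcont_f.mono sphere_subset_closedBall)
  have hi2 : CircleIntegrable
      (fun z => ((starRingEnd ℂ) z₀ * (((R:ℂ))^2 - (starRingEnd ℂ) z₀ * z)⁻¹) • f z) 0 R :=
    ContinuousOn.circleIntegrable hR.le (hg_cont.mono sphere_subset_closedBall)
  have hi1' := (circleIntegrable_iff (f := fun z => (z - z₀)⁻¹ • f z) (c := (0:ℂ)) R).1 hi1
  have hi2' := (circleIntegrable_iff
    (f := fun z => ((starRingEnd ℂ) z₀ * (((R:ℂ))^2 - (starRingEnd ℂ) z₀ * z)⁻¹) • f z)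
    (c := (0:ℂ)) R).1 hi2
  unfold circleIntegral at h1 h2
  have h3 := intervalIntegral.integral_add hi1' hi2'
  rw [h1, h2, add_zero] at h3
  simp only [deriv_circleMap, zero_add, smul_eq_mul] at h3
  have h4 : (∫ θ in (0:ℝ)..(2*Real.pi), (circleMap 0 R θ * I *
        ((circleMap 0 R θ - z₀)⁻¹ * f (circleMap 0 R θ)) + circleMap 0 R θ * I *
          ((starRingEnd ℂ) z₀ * (((R:ℂ))^2 - (starRingEnd ℂ) z₀ * circleMap 0 R θ)⁻¹ *
            f (circleMap 0 R θ))))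
      = ∫ θ in (0:ℝ)..(2*Real.pi), I *
          ((((R^2 - ‖z₀‖^2) / ‖circleMap 0 R θ - z₀‖^2 : ℝ) : ℂ) * f (circleMap 0 R θ)) := by
    apply intervalIntegral.integral_congr
    intro θ _
    have hw : ‖circleMap 0 R θ‖ = R := by
      rw [norm_circleMap_zero, abs_of_pos hR]
    have hk := kernel_eq hR hz hw
    calc circleMap 0 R θ * I *
        ((circleMap 0 R θ - z₀)⁻¹ * f (circleMap 0 R θ)) + circleMap 0 R θ * I *
          ((starRingEnd ℂ) z₀ * (((R:ℂ))^2 - (starRingEnd ℂ) z₀ * circleMap 0 R θ)⁻¹ *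
            f (circleMap 0 R θ))
        = (circleMap 0 R θ * I * ((circleMap 0 R θ - z₀)⁻¹ +
            (starRingEnd ℂ) z₀ * (((R:ℂ))^2 - (starRingEnd ℂ) z₀ * circleMap 0 R θ)⁻¹)) *
            f (circleMap 0 R θ) := by ring
      _ = I * ((((R^2 - ‖z₀‖^2) / ‖circleMap 0 R θ - z₀‖^2 : ℝ) : ℂ) * f (circleMap 0 R θ)) := by
          rw [hk]; ring
  rw [h4, intervalIntegral.integral_const_mul] at h3
  have hIne : (I : ℂ) ≠ 0 := Complex.I_ne_zero
  have hpine : ((Real.pi : ℂ)) ≠ 0 := by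
    simp [Real.pi_ne_zero]
  set S := ∫ t in (0:ℝ)..(2*Real.pi),
      (((R^2 - ‖z₀‖^2) / ‖circleMap 0 R t - z₀‖^2 : ℝ) : ℂ) * f (circleMap 0 R t) with hS
  have hne : (2*(Real.pi:ℂ)*I) ≠ 0 := mul_ne_zero (mul_ne_zero two_ne_zero hpine) hIne
  apply mul_left_cancel₀ hne
  rw [← h3]
  field_simp

section KeyLemma
open Complex Filter Set

lemma norm_le_one_of_rad {f : ℂ → ℂ} (hd : DifferentiableOn ℂ f (ball (0:ℂ) 1))
    {C : ℝ} (hC : ∀ z ∈ ball (0:ℂ) 1, ‖f z‖ ≤ C) (hrad : Rad f) :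
    ∀ z ∈ ball (0:ℂ) 1, ‖f z‖ ≤ 1 := by
  intro z₀ hz₀
  rw [mem_ball, dist_zero_right] at hz₀
  set a := ‖z₀‖ with ha
  have ha0 : 0 ≤ a := norm_nonneg _
  set ρ₀ : ℝ := (1 + a)/2 with hρ₀
  have haρ₀ : a < ρ₀ := by rw [hρ₀]; linarith
  have hρ₀1 : ρ₀ < 1 := by rw [hρ₀]; linarith
  have hρ₀0 : 0 < ρ₀ := by rw [hρ₀]; linarith
  -- the Poisson kernel
  set K : ℝ → ℝ → ℝ := fun ρ t => (ρ^2 - a^2) / ‖circleMap 0 ρ t - z₀‖^2 with hK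
  -- membership facts
  have hsub : ∀ ρ : ℝ, ρ ∈ Ioo ρ₀ 1 → ∀ t : ℝ, circleMap 0 ρ t ∈ ball (0:ℂ) 1 := by
    intro ρ hρ t
    rw [mem_ball, dist_zero_right, norm_circleMap_zero,
      abs_of_pos (hρ₀0.trans hρ.1)]
    exact hρ.2
  have hcne : ∀ ρ : ℝ, ρ₀ < ρ → ∀ t : ℝ, circleMap 0 ρ t - z₀ ≠ 0 := by
    intro ρ hρ t h
    rw [sub_eq_zero] at h
    have : ‖circleMap 0 ρ t‖ = ρ := by
      rw [norm_circleMap_zero, abs_of_pos (hρ₀0.trans hρ)]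
    rw [h] at this
    rw [← this] at hρ
    exact absurd (haρ₀.trans hρ) (lt_irrefl _)
  have hKnonneg : ∀ ρ : ℝ, ρ ∈ Ioo ρ₀ 1 → ∀ t : ℝ, 0 ≤ K ρ t := by
    intro ρ hρ t
    apply div_nonneg
    · nlinarith [hρ.1, haρ₀]
    · positivity
  have hKbound : ∀ ρ : ℝ, ρ ∈ Ioo ρ₀ 1 → ∀ t : ℝ, K ρ t ≤ 1 / (ρ₀ - a)^2 := by
    intro ρ hρ t
    have h1 : ρ^2 - a^2 ≤ 1 := by nlinarith [hρ.2, hρ.1]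
    have h2 : (ρ₀ - a) ≤ ‖circleMap 0 ρ t - z₀‖ := by
      have := norm_sub_norm_le (circleMap 0 ρ t) z₀
      have hcm : ‖circleMap 0 ρ t‖ = ρ := by
        rw [norm_circleMap_zero, abs_of_pos (hρ₀0.trans hρ.1)]
      rw [hcm] at this
      have : ρ - a ≤ ‖circleMap 0 ρ t - z₀‖ := this
      linarith [hρ.1]
    have h3 : (ρ₀ - a)^2 ≤ ‖circleMap 0 ρ t - z₀‖^2 := by
      nlinarith [haρ₀, norm_nonneg (circleMap 0 ρ t - z₀)]
    have hpos1 : 0 < ‖circleMap 0 ρ t - z₀‖^2 := pow_pos (norm_pos_iff.2 (hcne ρ hρ.1 t)) 2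
    have hpos2 : (0:ℝ) < (ρ₀ - a)^2 := pow_pos (by linarith) 2
    rw [hK]
    simp only
    rw [div_le_div_iff₀ hpos1 hpos2]
    nlinarith
  -- continuity facts for fixed ρ
  have hKcont : ∀ ρ : ℝ, ρ₀ < ρ → Continuous (fun t => K ρ t) := by
    intro ρ hρ
    apply Continuous.div continuous_const
    · exact (((continuous_circleMap 0 ρ).sub continuous_const).norm).pow 2
    · intro t
      exact ne_of_gt (pow_pos (norm_pos_iff.2 (hcne ρ hρ t)) 2)
  have hfcont : ∀ ρ : ℝ, ρ ∈ Ioo ρ₀ 1 → Continuous (fun t => f (circleMap 0 ρ t)) := by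
    intro ρ hρ
    exact hd.continuousOn.comp_continuous (continuous_circleMap 0 ρ) (fun t => hsub ρ hρ t)
  -- the Poisson integral identity for constants
  have hKint : ∀ ρ : ℝ, ρ ∈ Ioo ρ₀ 1 → (∫ t in (0:ℝ)..(2*Real.pi), K ρ t) = 2*Real.pi := by
    intro ρ hρ
    have hone := poisson_repr (hρ₀0.trans hρ.1) (show ‖z₀‖ < ρ from haρ₀.trans hρ.1)
      (f := fun _ => (1:ℂ)) ⟨differentiableOn_const _, continuousOn_const⟩
    simp only [mul_one] at hone
    rw [intervalIntegral.integral_ofReal] at hone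
    have hπ : ((Real.pi:ℂ)) ≠ 0 := by simp [Real.pi_ne_zero]
    field_simp at hone
    exact_mod_cast hone.symm
  -- the main inequality for each ρ
  set F : ℝ → ℝ := fun ρ => ∫ t in (0:ℝ)..(2*Real.pi), K ρ t * (‖f (circleMap 0 ρ t)‖ - 1)
    with hF
  have claim1 : ∀ ρ : ℝ, ρ ∈ Ioo ρ₀ 1 → ‖f z₀‖ ≤ 1 + (2*Real.pi)⁻¹ * F ρ := by
    intro ρ hρ
    have hfc : DiffContOnCl ℂ f (ball (0:ℂ) ρ) := by
      refine ⟨hd.mono (ball_subset_ball hρ.2.le), ?_⟩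
      apply hd.continuousOn.mono
      rw [closure_ball (0:ℂ) (ne_of_gt (hρ₀0.trans hρ.1))]
      exact closedBall_subset_ball hρ.2
    have hrepr := poisson_repr (hρ₀0.trans hρ.1) (show ‖z₀‖ < ρ from haρ₀.trans hρ.1) hfc
    have hnorm1 : ‖f z₀‖ ≤ (2*Real.pi)⁻¹ *
        ∫ t in (0:ℝ)..(2*Real.pi), K ρ t * ‖f (circleMap 0 ρ t)‖ := by
      rw [hrepr, norm_mul]
      have h2π : ‖(2 * (Real.pi:ℂ))⁻¹‖ = (2*Real.pi)⁻¹ := by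
        rw [norm_inv]
        have : (2 * (Real.pi:ℂ)) = ((2 * Real.pi : ℝ) : ℂ) := by push_cast; ring
        rw [this, Complex.norm_real, Real.norm_eq_abs, abs_of_pos Real.two_pi_pos]
      rw [h2π]
      apply mul_le_mul_of_nonneg_left _ (by positivity)
      calc ‖∫ t in (0:ℝ)..(2*Real.pi), ((K ρ t : ℝ) : ℂ) * f (circleMap 0 ρ t)‖
          ≤ ∫ t in (0:ℝ)..(2*Real.pi), ‖((K ρ t : ℝ) : ℂ) * f (circleMap 0 ρ t)‖ :=
            intervalIntegral.norm_integral_le_integral_norm Real.two_pi_pos.le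
        _ = ∫ t in (0:ℝ)..(2*Real.pi), K ρ t * ‖f (circleMap 0 ρ t)‖ := by
            apply intervalIntegral.integral_congr
            intro t _
            simp only
            rw [norm_mul, Complex.norm_real, Real.norm_eq_abs,
              _root_.abs_of_nonneg (hKnonneg ρ hρ t)]
    have hint1 : IntervalIntegrable (fun t => K ρ t * (‖f (circleMap 0 ρ t)‖ - 1))
        volume 0 (2*Real.pi) :=
      (((hKcont ρ hρ.1).mul (((hfcont ρ hρ).norm).sub continuous_const))).intervalIntegrable _ _
    have hint2 : IntervalIntegrable (fun t => K ρ t) volume 0 (2*Real.pi) :=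
      (hKcont ρ hρ.1).intervalIntegrable _ _
    have hsplit : (∫ t in (0:ℝ)..(2*Real.pi), K ρ t * ‖f (circleMap 0 ρ t)‖)
        = F ρ + ∫ t in (0:ℝ)..(2*Real.pi), K ρ t := by
      rw [hF]
      simp only
      rw [← intervalIntegral.integral_add hint1 hint2]
      apply intervalIntegral.integral_congr
      intro t _
      ring
    rw [hsplit, hKint ρ hρ] at hnorm1
    calc ‖f z₀‖ ≤ (2*Real.pi)⁻¹ * (F ρ + 2*Real.pi) := hnorm1
      _ = 1 + (2*Real.pi)⁻¹ * F ρ := by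
          field_simp
          ring
  -- dominated convergence
  have hIoo : Ioo ρ₀ 1 ∈ nhdsWithin (1:ℝ) (Iio 1) := by
    apply mem_nhdsWithin.2
    exact ⟨Ioi ρ₀, isOpen_Ioi, hρ₀1, by rintro x ⟨h1, h2⟩; exact ⟨h1, h2⟩⟩
  have claim2 : Tendsto F (nhdsWithin (1:ℝ) (Iio 1)) (nhds 0) := by
    have hdc := intervalIntegral.tendsto_integral_filter_of_dominated_convergence
      (μ := volume) (a := (0:ℝ)) (b := 2*Real.pi)
      (F := fun ρ t => K ρ t * (‖f (circleMap 0 ρ t)‖ - 1)) (f := fun _ => (0:ℝ))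
      (l := nhdsWithin (1:ℝ) (Iio 1))
      (bound := fun _ => (1/(ρ₀-a)^2) * (|C| + 1)) ?meas ?bd ?int ?lim
    case _ => simpa using hdc
    case meas =>
      filter_upwards [hIoo] with ρ hρ
      exact (((hKcont ρ hρ.1).mul (((hfcont ρ hρ).norm).sub continuous_const))).aestronglyMeasurable
    case bd =>
      filter_upwards [hIoo] with ρ hρ
      apply Filter.Eventually.of_forall
      intro t _
      have hfb : ‖f (circleMap 0 ρ t)‖ ≤ |C| := (hC _ (hsub ρ hρ t)).trans (le_abs_self C)
      have hfb0 : 0 ≤ ‖f (circleMap 0 ρ t)‖ := norm_nonneg _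
      rw [Real.norm_eq_abs, abs_mul, _root_.abs_of_nonneg (hKnonneg ρ hρ t)]
      apply mul_le_mul (hKbound ρ hρ t) _ (abs_nonneg _) (by positivity)
      rw [abs_le]
      constructor <;> [linarith; linarith [abs_nonneg C]]
    case int => exact intervalIntegrable_const
    case lim =>
      have hrad' := (ae_restrict_iff' measurableSet_Ioc).1 hrad
      filter_upwards [hrad'] with t ht htI
      have htIoc : t ∈ Set.Ioc (0:ℝ) (2*Real.pi) := by
        rwa [Set.uIoc_of_le Real.two_pi_pos.le] at htI
      have htt := ht htIoc
      have hcm : ∀ ρ : ℝ, circleMap 0 ρ t = (ρ:ℂ) * Complex.exp ((t:ℂ) * Complex.I) := by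
        intro ρ
        simp [circleMap]
      have hKt : Tendsto (fun ρ => K ρ t) (nhdsWithin (1:ℝ) (Iio 1))
          (nhds ((1 - a^2)/‖circleMap 0 1 t - z₀‖^2)) := by
        apply Tendsto.div
        · have : Continuous (fun ρ : ℝ => ρ^2 - a^2) := by continuity
          have := (this.tendsto 1).mono_left (nhdsWithin_le_nhds (s := Iio (1:ℝ)))
          simpa using this
        · have hc : Continuous (fun ρ : ℝ => ‖circleMap 0 ρ t - z₀‖^2) := by
            apply Continuous.pow
            apply Continuous.norm
            apply Continuous.sub _ continuous_const
            simp only [circleMap, zero_add]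
            exact (Complex.continuous_ofReal.mul continuous_const)
          exact (hc.tendsto 1).mono_left (nhdsWithin_le_nhds (s := Iio (1:ℝ)))
        · exact ne_of_gt (pow_pos (norm_pos_iff.2 (hcne 1 hρ₀1 t)) 2)
      have hft : Tendsto (fun ρ => ‖f (circleMap 0 ρ t)‖ - 1) (nhdsWithin (1:ℝ) (Iio 1))
          (nhds 0) := by
        have : Tendsto (fun ρ => ‖f (circleMap 0 ρ t)‖) (nhdsWithin (1:ℝ) (Iio 1)) (nhds 1) := by
          apply htt.congr
          intro ρ
          rw [hcm ρ]
        have := this.sub (tendsto_const_nhds (x := (1:ℝ)))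
        simpa using this
      have := hKt.mul hft
      simpa using this
  -- conclude
  have hev : ∀ᶠ ρ in nhdsWithin (1:ℝ) (Iio 1), ‖f z₀‖ ≤ 1 + (2*Real.pi)⁻¹ * F ρ := by
    filter_upwards [hIoo] with ρ hρ
    exact claim1 ρ hρ
  have hlim : Tendsto (fun ρ => 1 + (2*Real.pi)⁻¹ * F ρ) (nhdsWithin (1:ℝ) (Iio 1))
      (nhds 1) := by
    have := (tendsto_const_nhds (x := (1:ℝ))).add (claim2.const_mul (2*Real.pi)⁻¹)
    simpa using this
  exact ge_of_tendsto hlim hev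

end KeyLemma
end Poisson

lemma hinf_of_inner {f : ℂ → ℂ} (h : IsInner f) : IsHinf f := ⟨h.1, 1, h.2.1⟩

lemma mk_inner {f : ℂ → ℂ} (hdiff : DifferentiableOn ℂ f (ball (0:ℂ) 1))
    {C : ℝ} (hC : ∀ z ∈ ball (0:ℂ) 1, ‖f z‖ ≤ C) (hr : Rad f) : IsInner f :=
  ⟨hdiff, norm_le_one_of_rad hdiff hC hr, hr⟩

end InnerAux

/-- Distributivity of the lattice of inner functions under divisibility:
`θ₁ ∨ (θ₂ ∧ θ₃) ≡ (θ₁ ∨ θ₂) ∧ (θ₁ ∨ θ₃)`. -/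
theorem stmt_14 (θ₁ θ₂ θ₃ : ℂ → ℂ)
    (h₁ : IsInner θ₁) (h₂ : IsInner θ₂) (h₃ : IsInner θ₃)
    (m₂₃ : ℂ → ℂ) (hm₂₃ : IsGCInnerDiv θ₂ θ₃ m₂₃)
    (j : ℂ → ℂ) (hj : IsLCInnerMul θ₁ m₂₃ j)
    (j₁₂ : ℂ → ℂ) (hj₁₂ : IsLCInnerMul θ₁ θ₂ j₁₂)
    (j₁₃ : ℂ → ℂ) (hj₁₃ : IsLCInnerMul θ₁ θ₃ j₁₃)
    (m : ℂ → ℂ) (hm : IsGCInnerDiv j₁₂ j₁₃ m) :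
    InnerEquiv j m := by
  obtain ⟨h23i, hd2, hd3, Hg23⟩ := hm₂₃
  obtain ⟨hji, hθ1j, hm23j, Hlj⟩ := hj
  obtain ⟨h12i, h1j12, h2j12, Hl12⟩ := hj₁₂
  obtain ⟨h13i, h1j13, h3j13, Hl13⟩ := hj₁₃
  obtain ⟨hmi, hmj12, hmj13, Hg⟩ := hm
  -- easy (lattice) direction : j ∣ m
  have hθ1m : InnerDvd θ₁ m := Hg θ₁ h₁ h1j12 h1j13
  have hm23m : InnerDvd m₂₃ m :=
    Hg m₂₃ h23i (innerDvd_trans hd2 h2j12) (innerDvd_trans hd3 h3j13)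
  have hjm : InnerDvd j m := Hlj m hmi hθ1m hm23m
  refine ⟨hjm, ?_⟩
  -- hard direction : m ∣ j
  obtain ⟨w₀, hw₀H, hw₀⟩ := hjm
  have hradj : Rad j := hji.2.2
  have hradm : Rad m := hmi.2.2
  have hradw₀ : Rad w₀ := rad_div hradj hradm hw₀
  obtain ⟨u₂, hu₂H, hu₂⟩ := hd2
  obtain ⟨u₃, hu₃H, hu₃⟩ := hd3
  obtain ⟨q, hqH, hq⟩ := hm23j
  obtain ⟨p, hpH, hp⟩ := hθ1j
  have hradm23 : Rad m₂₃ := h23i.2.2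
  have hradu₂ : Rad u₂ := rad_div hradm23 h₂.2.2 hu₂
  have hradu₃ : Rad u₃ := rad_div hradm23 h₃.2.2 hu₃
  -- `j·u₂` and `j·u₃` are inner
  have hjH : IsHinf j := hinf_of_inner hji
  have hju₂H : IsHinf (fun z => j z * u₂ z) := hinf_mul hjH hu₂H
  have hju₃H : IsHinf (fun z => j z * u₃ z) := hinf_mul hjH hu₃H
  obtain ⟨C₂, hC₂⟩ := hju₂H.2
  obtain ⟨C₃, hC₃⟩ := hju₃H.2
  have hju₂i : IsInner (fun z => j z * u₂ z) :=
    mk_inner hju₂H.1 hC₂ (rad_mul hradj hradu₂)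
  have hju₃i : IsInner (fun z => j z * u₃ z) :=
    mk_inner hju₃H.1 hC₃ (rad_mul hradj hradu₃)
  -- θ₁ ∣ j·u₂ and θ₂ ∣ j·u₂, hence j₁₂ ∣ j·u₂ ; likewise for u₃
  have h1ju₂ : InnerDvd θ₁ (fun z => j z * u₂ z) :=
    ⟨fun z => p z * u₂ z, hinf_mul hpH hu₂H, fun z hz => by
      show j z * u₂ z = θ₁ z * (p z * u₂ z)
      rw [hp z hz]; ring⟩
  have h2ju₂ : InnerDvd θ₂ (fun z => j z * u₂ z) :=
    ⟨q, hqH, fun z hz => by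
      show j z * u₂ z = θ₂ z * q z
      rw [hq z hz, hu₂ z hz]; ring⟩
  have h1ju₃ : InnerDvd θ₁ (fun z => j z * u₃ z) :=
    ⟨fun z => p z * u₃ z, hinf_mul hpH hu₃H, fun z hz => by
      show j z * u₃ z = θ₁ z * (p z * u₃ z)
      rw [hp z hz]; ring⟩
  have h3ju₃ : InnerDvd θ₃ (fun z => j z * u₃ z) :=
    ⟨q, hqH, fun z hz => by
      show j z * u₃ z = θ₃ z * q z
      rw [hq z hz, hu₃ z hz]; ring⟩
  have hmju₂ : InnerDvd m (fun z => j z * u₂ z) :=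
    innerDvd_trans hmj12 (Hl12 _ hju₂i h1ju₂ h2ju₂)
  have hmju₃ : InnerDvd m (fun z => j z * u₃ z) :=
    innerDvd_trans hmj13 (Hl13 _ hju₃i h1ju₃ h3ju₃)
  obtain ⟨b₂, hb₂H, hb₂⟩ := hmju₂
  obtain ⟨b₃, hb₃H, hb₃⟩ := hmju₃
  -- cancel j : u₂ = w₀·b₂ and u₃ = w₀·b₃ on the ball
  have hu₂eq : ∀ z ∈ ball (0:ℂ) 1, u₂ z = w₀ z * b₂ z := by
    apply cancel hji hu₂H.1 (hw₀H.1.mul hb₂H.1)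
    intro z hz
    have e1 := hb₂ z hz
    have e2 := hw₀ z hz
    simp only [Pi.mul_apply] at e1 ⊢
    rw [show j z * (w₀ z * b₂ z) = j z * w₀ z * b₂ z by ring, ← e2]
    exact e1
  have hu₃eq : ∀ z ∈ ball (0:ℂ) 1, u₃ z = w₀ z * b₃ z := by
    apply cancel hji hu₃H.1 (hw₀H.1.mul hb₃H.1)
    intro z hz
    have e1 := hb₃ z hz
    have e2 := hw₀ z hz
    simp only [Pi.mul_apply] at e1 ⊢
    rw [show j z * (w₀ z * b₃ z) = j z * w₀ z * b₃ z by ring, ← e2]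
    exact e1
  -- `e := m₂₃ · w₀` is an inner common divisor of θ₂ and θ₃
  have hm23H : IsHinf m₂₃ := hinf_of_inner h23i
  have heH : IsHinf (fun z => m₂₃ z * w₀ z) := hinf_mul hm23H hw₀H
  obtain ⟨Ce, hCe⟩ := heH.2
  have hei : IsInner (fun z => m₂₃ z * w₀ z) :=
    mk_inner heH.1 hCe (rad_mul hradm23 hradw₀)
  have he2 : InnerDvd (fun z => m₂₃ z * w₀ z) θ₂ :=
    ⟨b₂, hb₂H, fun z hz => by
      show θ₂ z = m₂₃ z * w₀ z * b₂ z
      rw [hu₂ z hz, hu₂eq z hz]; ring⟩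
  have he3 : InnerDvd (fun z => m₂₃ z * w₀ z) θ₃ :=
    ⟨b₃, hb₃H, fun z hz => by
      show θ₃ z = m₂₃ z * w₀ z * b₃ z
      rw [hu₃ z hz, hu₃eq z hz]; ring⟩
  obtain ⟨s, hsH, hs⟩ := Hg23 _ hei he2 he3
  -- cancel m₂₃ : w₀ · s = 1 on the ball
  have hws1 : ∀ z ∈ ball (0:ℂ) 1, (1:ℂ) = w₀ z * s z := by
    apply cancel h23i (differentiableOn_const _) (hw₀H.1.mul hsH.1)
    intro z hz
    have e1 := hs z hz
    simp only [Pi.mul_apply] at e1 ⊢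
    rw [mul_one, show m₂₃ z * (w₀ z * s z) = m₂₃ z * w₀ z * s z by ring]
    exact e1
  -- conclude : j = m · s
  exact ⟨s, hsH, fun z hz => by
    rw [hw₀ z hz, show j z * w₀ z * s z = j z * (w₀ z * s z) by ring, ← hws1 z hz, mul_one]⟩
end
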